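/- arXiv:1506.01837 — 2 statements merged into one kernel-verified Lean document; each statement's English description precedes it below -/
import Mathlib

section
/- Let (M_b, ∼) be an arbitrage-free market with NA price π, and assume the σ-additivity of ∼ on M_b⁺: whenever β_k, γ_k ∈ M_b⁺ with β_k ∼ γ_k for all k ≥ 1 and both Σ_{k=1}^∞ β_k and Σ_{k=1}^∞ γ_k lie in M_b⁺, then Σ_{k=1}^∞ β_k ∼ Σ_{k=1}^∞ γ_k. Then π is σ-additive on M_b⁺: if γ_k ∈ M_b⁺ for all k ≥ 1 and Σ_{k=1}^∞ γ_k ∈ M_b⁺, then π(Σ_{k=1}^∞ γ_k) = Σ_{k=1}^∞ π(γ_k) (in particular the series of prices converges). -/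
open MeasureTheory
open scoped NNReal

/-- The unit zero-coupon bond with maturity `t`: the Dirac measure at `t`,
as a finite signed Borel measure on `[0,∞)` (modeled as `ℝ≥0`). -/
noncomputable def uzcb (t : ℝ≥0) : SignedMeasure ℝ≥0 :=
  (MeasureTheory.Measure.dirac t).toSignedMeasure

/-- A market of deterministic cash flows: a reflexive, symmetric, additive relation on the
finite signed Borel measures on `[0,∞)` such that every nonzero nonnegative cash flow has at
least one strictly positive spot price. -/
def IsMarket (r : SignedMeasure ℝ≥0 → SignedMeasure ℝ≥0 → Prop) : Prop :=
  (∀ γ, r γ γ) ∧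
  (∀ γ₁ γ₂, r γ₁ γ₂ → r γ₂ γ₁) ∧
  (∀ γ₁ γ₂ γ₃ γ₄, r γ₁ γ₂ → r γ₃ γ₄ → r (γ₁ + γ₃) (γ₂ + γ₄)) ∧
  (∀ γ : SignedMeasure ℝ≥0, 0 ≤ γ → γ ≠ 0 → ∃ b : ℝ, 0 < b ∧ r γ (b • uzcb 0))

/-- No-arbitrage: no nonzero nonnegative cash flow is exchangeable for the null cash flow. -/
def NoArb (r : SignedMeasure ℝ≥0 → SignedMeasure ℝ≥0 → Prop) : Prop :=
  ¬ ∃ γ : SignedMeasure ℝ≥0, 0 ≤ γ ∧ γ ≠ 0 ∧ r 0 γ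

/-- `γ` is the (setwise) sum of the sequence of signed measures `f`. -/
def IsSumOf (γ : SignedMeasure ℝ≥0) (f : ℕ → SignedMeasure ℝ≥0) : Prop :=
  ∀ A : Set ℝ≥0, MeasurableSet A → HasSum (fun k => f k A) (γ A)

lemma uzcb_apply {A : Set ℝ≥0} (hA : MeasurableSet A) :
    uzcb 0 A = ((Measure.dirac (0:ℝ≥0)) A).toReal :=
  Measure.toSignedMeasure_apply_measurable hA

lemma smul_uzcb_nonneg {c : ℝ} (hc : 0 ≤ c) : (0 : SignedMeasure ℝ≥0) ≤ c • uzcb 0 := by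
  rw [VectorMeasure.le_iff]
  intro A hA
  rw [VectorMeasure.zero_apply, VectorMeasure.smul_apply, uzcb_apply hA, smul_eq_mul]
  positivity

lemma smul_uzcb_ne_zero {c : ℝ} (hc : c ≠ 0) : c • uzcb 0 ≠ 0 := by
  intro h
  have h2 := congrArg (fun v : SignedMeasure ℝ≥0 => v Set.univ) h
  simp only [VectorMeasure.smul_apply, VectorMeasure.zero_apply,
    uzcb_apply MeasurableSet.univ, smul_eq_mul] at h2
  simp at h2
  exact hc h2

lemma nonneg_apply {γ : SignedMeasure ℝ≥0} (hγ : 0 ≤ γ) {A : Set ℝ≥0}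
    (hA : MeasurableSet A) : 0 ≤ γ A := by
  have := VectorMeasure.le_iff.mp hγ A hA
  simpa using this

/-- σ-additivity of the NA price on nonnegative cash flows follows from
σ-additivity of the exchange relation. -/
theorem sigma_additivity_of_price (r : SignedMeasure ℝ≥0 → SignedMeasure ℝ≥0 → Prop)
    (hM : IsMarket r) (hNA : NoArb r)
    (π : SignedMeasure ℝ≥0 → ℝ)
    (hπ : ∀ γ : SignedMeasure ℝ≥0, r γ (π γ • uzcb 0))
    (hσ : ∀ β γ : ℕ → SignedMeasure ℝ≥0, (∀ k, 0 ≤ β k) → (∀ k, 0 ≤ γ k) →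
      (∀ k, r (β k) (γ k)) → ∀ B G : SignedMeasure ℝ≥0, 0 ≤ B → 0 ≤ G →
      IsSumOf B β → IsSumOf G γ → r B G) :
    ∀ γ : ℕ → SignedMeasure ℝ≥0, (∀ k, 0 ≤ γ k) →
      ∀ G : SignedMeasure ℝ≥0, 0 ≤ G → IsSumOf G γ →
      HasSum (fun k => π (γ k)) (π G) := by
  obtain ⟨hrefl, hsymm, hadd, hpos⟩ := hM
  -- K1: a scalar multiple of the bond related to 0 must have scalar 0.
  have K1 : ∀ d : ℝ, r (d • uzcb 0) 0 → d = 0 := by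
    intro d hd
    by_contra hne
    rcases lt_or_gt_of_ne hne with hlt | hgt
    · have h2 := hadd _ _ _ _ hd (hrefl ((-d) • uzcb 0))
      rw [← add_smul, add_neg_cancel, zero_smul, zero_add] at h2
      exact hNA ⟨(-d) • uzcb 0, smul_uzcb_nonneg (by linarith),
        smul_uzcb_ne_zero (by linarith), h2⟩
    · exact hNA ⟨d • uzcb 0, smul_uzcb_nonneg hgt.le, smul_uzcb_ne_zero hne, hsymm _ _ hd⟩
  -- K2: scalar injectivity
  have K2 : ∀ a b : ℝ, r (a • uzcb 0) (b • uzcb 0) → a = b := by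
    intro a b h
    have h2 := hadd _ _ _ _ h (hrefl ((-b) • uzcb 0))
    rw [← add_smul, ← add_smul, add_neg_cancel, zero_smul] at h2
    have := K1 (a + -b) h2
    linarith
  -- K3: π is odd
  have K3 : ∀ γ : SignedMeasure ℝ≥0, π (-γ) = -π γ := by
    intro γ
    have h := hadd _ _ _ _ (hπ γ) (hπ (-γ))
    rw [add_neg_cancel, ← add_smul] at h
    have h2 : r ((π γ + π (-γ)) • uzcb 0) 0 := by
      have := hsymm _ _ h
      simpa using this
    have := K1 _ h2
    linarith
  -- K4: related flows have equal price
  have K4 : ∀ α β : SignedMeasure ℝ≥0, r α β → π α = π β := by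
    intro α β h
    have h1 := hadd _ _ _ _ h (hsymm _ _ (hπ (-β)))
    rw [add_neg_cancel] at h1
    have h2 := hadd _ _ _ _ h1 (hπ (-α))
    rw [zero_add] at h2
    have h3 : r (π (-β) • uzcb 0) (π (-α) • uzcb 0) := by
      have e : α + π (-β) • uzcb 0 + -α = π (-β) • uzcb 0 := by abel
      rwa [e] at h2
    have := K2 _ _ h3
    rw [K3 α, K3 β] at this
    linarith
  -- K5: price of scalar bonds
  have K5 : ∀ c : ℝ, π (c • uzcb 0) = c := fun c => (K2 c _ (hπ _)).symm
  have Kzero : π 0 = 0 := by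
    have := K5 0
    rwa [zero_smul] at this
  -- K6: nonneg flows have nonneg price
  have K6 : ∀ γ : SignedMeasure ℝ≥0, 0 ≤ γ → 0 ≤ π γ := by
    intro γ hγ
    by_cases h0 : γ = 0
    · rw [h0, Kzero]
    · obtain ⟨b, hb, hrb⟩ := hpos γ hγ h0
      rw [K4 _ _ hrb, K5]
      exact hb.le
  -- additivity of π
  have Kadd : ∀ α β : SignedMeasure ℝ≥0, π (α + β) = π α + π β := by
    intro α β
    have h := hadd _ _ _ _ (hπ α) (hπ β)
    rw [← add_smul] at h
    rw [K4 _ _ h, K5]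
  intro γ hγ G hG hsum
  set p := fun k => π (γ k) with hp_def
  have hp : ∀ k, 0 ≤ p k := fun k => K6 _ (hγ k)
  -- price of finite partial sums
  have hfin : ∀ n : ℕ, π (∑ k ∈ Finset.range n, γ k) = ∑ k ∈ Finset.range n, p k := by
    intro n
    induction n with
    | zero => simpa using Kzero
    | succ n ih => rw [Finset.sum_range_succ, Finset.sum_range_succ, Kadd, ih]
  -- finset sums of signed measures applied to a set
  have hfinapply : ∀ (n : ℕ) (A : Set ℝ≥0),
      (∑ k ∈ Finset.range n, γ k : SignedMeasure ℝ≥0) A = ∑ k ∈ Finset.range n, γ k A := by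
    intro n A
    induction n with
    | zero => simp
    | succ n ih => rw [Finset.sum_range_succ, Finset.sum_range_succ, VectorMeasure.add_apply, ih]
  -- partial sums bounded by π G
  have hbound : ∀ n : ℕ, ∑ k ∈ Finset.range n, p k ≤ π G := by
    intro n
    have hR : (0 : SignedMeasure ℝ≥0) ≤ G - ∑ k ∈ Finset.range n, γ k := by
      rw [VectorMeasure.le_iff]
      intro A hA
      rw [VectorMeasure.zero_apply, VectorMeasure.sub_apply, hfinapply]
      have := sum_le_hasSum (Finset.range n) (fun k _ => nonneg_apply (hγ k) hA) (hsum A hA)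
      linarith
    have hπR := K6 _ hR
    have : π G = ∑ k ∈ Finset.range n, p k + π (G - ∑ k ∈ Finset.range n, γ k) := by
      rw [← hfin, ← Kadd]
      congr 1
      abel
    linarith
  have hsummable : Summable p := summable_of_sum_range_le hp hbound
  obtain ⟨s, hS⟩ := hsummable
  have hs : 0 ≤ s := hS.nonneg hp
  -- the bond sum
  have hsumbond : IsSumOf (s • uzcb 0) (fun k => p k • uzcb 0) := by
    intro A hA
    simp only [VectorMeasure.smul_apply, smul_eq_mul]
    exact hS.mul_right _
  have hr : r G (s • uzcb 0) :=
    hσ γ (fun k => p k • uzcb 0) hγ (fun k => smul_uzcb_nonneg (hp k))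
      (fun k => hπ (γ k)) G (s • uzcb 0) hG (smul_uzcb_nonneg hs) hsum hsumbond
  have : π G = s := by rw [K4 _ _ hr, K5]
  rwa [this]
end

section
/- Let (M_b, ∼) be an arbitrage-free market with NA price π and unit zero-coupon bond prices P_t = π(δ_t), and assume: (A1) t ↦ P_t is continuous, bounded and strictly positive on [0,∞); (A2) for every γ ∈ M_b⁺ and all 0 ≤ s < t there exists b with min{P_r : r ∈ [s,t]} ≤ b ≤ max{P_r : r ∈ [s,t]} such that π(γ_{(s,t]}) = b·γ((s,t]), where γ_{(s,t]} is the restriction of γ to (s,t]; (A3) whenever β_k, γ_k ∈ M_b⁺ with β_k ∼ γ_k for all k and both Σ_k β_k and Σ_k γ_k lie in M_b⁺, then Σ_k β_k ∼ Σ_k γ_k. Then for every γ ∈ M_b the uniquely determined no-arbitrage price satisfies the Choquet formula π(γ) = ∫_0^∞ P_t dγ(t), the integral being ∫_0^∞ P_t dγ⁺(t) − ∫_0^∞ P_t dγ⁻(t) for the Jordan decomposition γ = γ⁺ − γ⁻. -/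
open MeasureTheory
open scoped NNReal

/-- Integral of a function against a finite signed Borel measure, defined via the Jordan
decomposition γ = γ⁺ - γ⁻ as ∫ f dγ⁺ - ∫ f dγ⁻. -/
noncomputable def sInt (f : ℝ≥0 → ℝ) (γ : SignedMeasure ℝ≥0) : ℝ :=
  (∫ t, f t ∂γ.toJordanDecomposition.posPart) -
    ∫ t, f t ∂γ.toJordanDecomposition.negPart

/-!
Under no-arbitrage the price functional is additive, satisfies `π (c • δ₀) = c` and is
nonnegative on nonnegative cash flows, so by the Jordan decomposition it suffices to price a
finite measure `μ`. Cutting `[0,∞)` into `{0}` and the cells `(kh, (k+1)h]`, σ-additivity (A3)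
and the average value property (A2) give `π μ = ∫ g_h dμ` for a step function `g_h` whose value
on each cell lies between the extrema of `P` over its closure. As `h → 0`, continuity of `P`
gives `g_h → P` pointwise, and since `P` is bounded, dominated convergence yields
`π μ = ∫ P dμ`.
-/

open Set Filter Topology

/-- Assumption (A2). -/
def HasAverageValues (π : SignedMeasure ℝ≥0 → ℝ) (P : ℝ≥0 → ℝ) : Prop :=
  ∀ γ : SignedMeasure ℝ≥0, 0 ≤ γ → ∀ s t : ℝ≥0, s < t →
    ∃ b : ℝ, sInf (P '' Set.Icc s t) ≤ b ∧ b ≤ sSup (P '' Set.Icc s t) ∧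
      π (γ.restrict (Set.Ioc s t)) = b * γ (Set.Ioc s t)

/-- Assumption (A3). -/
def IsSigmaAdditiveRel (r : SignedMeasure ℝ≥0 → SignedMeasure ℝ≥0 → Prop) : Prop :=
  ∀ β γ : ℕ → SignedMeasure ℝ≥0, (∀ k, 0 ≤ β k) → (∀ k, 0 ≤ γ k) →
    (∀ k, r (β k) (γ k)) → ∀ B G : SignedMeasure ℝ≥0, 0 ≤ B → 0 ≤ G →
    IsSumOf B β → IsSumOf G γ → r B G

lemma zero_le_uzcb (t : ℝ≥0) : 0 ≤ uzcb t :=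
  Measure.zero_le_toSignedMeasure _

lemma zero_le_smul_uzcb {c : ℝ} (hc : 0 ≤ c) (t : ℝ≥0) : 0 ≤ c • uzcb t := by
  intro A hA
  simp only [zero_apply, uzcb, smul_apply, Measure.toSignedMeasure_apply_measurable hA,
    smul_eq_mul]
  positivity

lemma smul_uzcb_apply_univ (c : ℝ) (t : ℝ≥0) : (c • uzcb t) univ = c := by
  simp [uzcb, Measure.toSignedMeasure_apply_measurable MeasurableSet.univ]

lemma NoArb.not_rel_zero_smul_uzcb {r : SignedMeasure ℝ≥0 → SignedMeasure ℝ≥0 → Prop}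
    (hNA : NoArb r) {c : ℝ} (hc : 0 < c) (t : ℝ≥0) : ¬ r 0 (c • uzcb t) := fun h =>
  hNA ⟨c • uzcb t, zero_le_smul_uzcb hc.le t,
    fun h0 => hc.ne' (by simpa [h0] using (smul_uzcb_apply_univ c t).symm), h⟩

lemma isSumOf_tsum_smul (γ : SignedMeasure ℝ≥0) {c : ℕ → ℝ} (hc : Summable c) :
    IsSumOf ((∑' k, c k) • γ) (fun k => c k • γ) :=
  fun A _ => by simpa using hc.hasSum.mul_right (γ A)

lemma isSumOf_restrict_fiber (γ : SignedMeasure ℝ≥0) {f : ℝ≥0 → ℕ} (hf : Measurable f) :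
    IsSumOf γ (fun k => γ.restrict (f ⁻¹' {k})) := by
  intro A hA
  have hfib (k : ℕ) : MeasurableSet (f ⁻¹' {k}) := hf (measurableSet_singleton k)
  have := γ.hasSum_of_disjoint_iUnion (fun k => hA.inter (hfib k))
    fun i j hij => (pairwise_disjoint_fiber f hij).mono inter_subset_right inter_subset_right
  simpa [VectorMeasure.restrict_apply _ (hfib _) hA, ← inter_iUnion, ← preimage_iUnion,
    iUnion_of_singleton] using this

section Grid

variable {h : ℝ≥0}

lemma ceil_div_eq_zero_iff (hh : 0 < h) {t : ℝ≥0} : ⌈t / h⌉₊ = 0 ↔ t = 0 := by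
  simp [hh.ne']

lemma ceil_div_eq_succ_iff (hh : 0 < h) {t : ℝ≥0} {k : ℕ} :
    ⌈t / h⌉₊ = k + 1 ↔ t ∈ Ioc (k * h) ((k + 1) * h) := by
  rw [Nat.ceil_eq_iff k.succ_ne_zero, mem_Ioc, lt_div_iff₀ hh, div_le_iff₀ hh]
  push_cast
  simp

lemma mem_Icc_ceil_div (hh : 0 < h) (t : ℝ≥0) :
    t ∈ Icc (⌈t / h⌉₊ * h - h) (⌈t / h⌉₊ * h) := by
  refine ⟨tsub_le_iff_right.2 ?_, (div_le_iff₀ hh).1 (Nat.le_ceil _)⟩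
  have := (Nat.ceil_lt_add_one (zero_le : 0 ≤ t / h)).le
  rwa [← le_div_iff₀ hh, add_div, div_self hh.ne']

lemma Icc_tsub_subset_closedBall {a t : ℝ≥0} (ht : t ∈ Icc (a - h) a) :
    Icc (a - h) a ⊆ Metric.closedBall t h := by
  intro s hs
  have hs' : (a : ℝ) ≤ s + h := by exact_mod_cast tsub_le_iff_right.1 hs.1
  have ht' : (a : ℝ) ≤ t + h := by exact_mod_cast tsub_le_iff_right.1 ht.1
  have hsa : (s : ℝ) ≤ a := by exact_mod_cast hs.2
  have hta : (t : ℝ) ≤ a := by exact_mod_cast ht.2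
  rw [Metric.mem_closedBall, NNReal.dist_eq, abs_sub_le_iff]
  constructor <;> linarith

end Grid

lemma tendsto_of_mem_Icc_sInf_sSup_image {X : Type*} [PseudoMetricSpace X] {P : X → ℝ} {x : X}
    (hP : ContinuousAt P x) {S : ℕ → Set X} {δ : ℕ → ℝ} (hδ : Tendsto δ atTop (𝓝 0))
    (hxS : ∀ n, x ∈ S n) (hS : ∀ n, S n ⊆ Metric.closedBall x (δ n)) {g : ℕ → ℝ}
    (hg : ∀ n, g n ∈ Icc (sInf (P '' S n)) (sSup (P '' S n))) :
    Tendsto g atTop (𝓝 (P x)) := by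
  rw [Metric.tendsto_nhds]
  intro ε hε
  obtain ⟨d, hd, hPd⟩ := Metric.continuousAt_iff.1 hP (ε / 2) (half_pos hε)
  filter_upwards [(hδ.eventually (gt_mem_nhds hd))] with n hn
  have hnear : ∀ y ∈ P '' S n, |y - P x| < ε / 2 := by
    rintro _ ⟨y, hy, rfl⟩
    exact hPd ((hS n hy).trans_lt hn)
  have hne : (P '' S n).Nonempty := ⟨P x, x, hxS n, rfl⟩
  have hsup : sSup (P '' S n) ≤ P x + ε / 2 :=
    csSup_le hne fun y hy => by linarith [(abs_sub_lt_iff.1 (hnear y hy)).1]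
  have hinf : P x - ε / 2 ≤ sInf (P '' S n) :=
    le_csInf hne fun y hy => by linarith [(abs_sub_lt_iff.1 (hnear y hy)).2]
  rw [Real.dist_eq, abs_sub_lt_iff]
  constructor <;> linarith [(hg n).1, (hg n).2]

lemma integral_comp_eq_tsum {α : Type*} [MeasurableSpace α] {μ : Measure α} [IsFiniteMeasure μ]
    {f : α → ℕ} (hf : Measurable f) {b : ℕ → ℝ} {C : ℝ} (hb : ∀ k, ‖b k‖ ≤ C) :
    ∫ x, b (f x) ∂μ = ∑' k, b k * μ.real (f ⁻¹' {k}) := by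
  rw [← integral_map hf.aemeasurable (measurable_of_countable b).aestronglyMeasurable,
    integral_countable (.of_bound (measurable_of_countable b).aestronglyMeasurable C ?_)]
  · simp [map_measureReal_apply hf (measurableSet_singleton _), mul_comm]
  · exact Eventually.of_forall hb

lemma summable_measureReal_fiber (μ : Measure ℝ≥0) [IsFiniteMeasure μ] {f : ℝ≥0 → ℕ}
    (hf : Measurable f) : Summable fun k => μ.real (f ⁻¹' {k}) := by
  have := isSumOf_restrict_fiber μ.toSignedMeasure hf univ MeasurableSet.univ
  simp only [VectorMeasure.restrict_apply _ (hf (measurableSet_singleton _)) MeasurableSet.univ,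
    univ_inter, Measure.toSignedMeasure_apply_measurable (hf (measurableSet_singleton _))] at this
  exact this.summable

lemma toSignedMeasure_restrict_singleton_zero (μ : Measure ℝ≥0) [IsFiniteMeasure μ] :
    (μ.restrict {0}).toSignedMeasure = μ.real {0} • uzcb 0 := by
  ext A hA
  simp [uzcb, Measure.toSignedMeasure_apply_measurable hA, measureReal_def]

namespace IsMarket

variable {r : SignedMeasure ℝ≥0 → SignedMeasure ℝ≥0 → Prop} {π : SignedMeasure ℝ≥0 → ℝ}

lemma rel_zero_sub (hM : IsMarket r) {γ₁ γ₂ : SignedMeasure ℝ≥0} (h : r γ₁ γ₂) :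
    r 0 (γ₂ - γ₁) := by
  simpa [← sub_eq_add_neg] using hM.2.2.1 _ _ _ _ h (hM.1 (-γ₁))

lemma eq_of_rel_smul_uzcb (hM : IsMarket r) (hNA : NoArb r) {γ : SignedMeasure ℝ≥0} {a b : ℝ}
    (ha : r γ (a • uzcb 0)) (hb : r γ (b • uzcb 0)) : a = b := by
  have le : ∀ {a b : ℝ}, r γ (a • uzcb 0) → r γ (b • uzcb 0) → b ≤ a := by
    intro a b ha hb
    by_contra! hlt
    have h := hM.rel_zero_sub (hM.2.2.1 _ _ _ _ (hM.2.1 _ _ ha) hb)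
    rw [show γ + b • uzcb 0 - (a • uzcb 0 + γ) = (b - a) • uzcb 0 by module] at h
    exact hNA.not_rel_zero_smul_uzcb (sub_pos.2 hlt) 0 h
  exact le_antisymm (le hb ha) (le ha hb)

variable (hM : IsMarket r) (hNA : NoArb r) (hπ : ∀ γ, r γ (π γ • uzcb 0))
include hM hNA hπ

lemma price_eq {γ : SignedMeasure ℝ≥0} {a : ℝ} (h : r γ (a • uzcb 0)) : π γ = a :=
  hM.eq_of_rel_smul_uzcb hNA (hπ γ) h

lemma price_smul_uzcb_zero (c : ℝ) : π (c • uzcb 0) = c :=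
  price_eq hM hNA hπ (hM.1 _)

lemma price_add (γ₁ γ₂ : SignedMeasure ℝ≥0) : π (γ₁ + γ₂) = π γ₁ + π γ₂ :=
  price_eq hM hNA hπ (by rw [add_smul]; exact hM.2.2.1 _ _ _ _ (hπ γ₁) (hπ γ₂))

lemma price_sub (γ₁ γ₂ : SignedMeasure ℝ≥0) : π (γ₁ - γ₂) = π γ₁ - π γ₂ := by
  rw [eq_sub_iff_add_eq, ← price_add hM hNA hπ, sub_add_cancel]

lemma price_nonneg {γ : SignedMeasure ℝ≥0} (hγ : 0 ≤ γ) : 0 ≤ π γ := by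
  rcases eq_or_ne γ 0 with rfl | hγ0
  · simpa using (price_smul_uzcb_zero hM hNA hπ 0).ge
  · obtain ⟨b, hb, h⟩ := hM.2.2.2 γ hγ hγ0
    exact price_eq hM hNA hπ h ▸ hb.le

lemma price_eq_tsum (hσ : IsSigmaAdditiveRel r) {γ : SignedMeasure ℝ≥0} (hγ : 0 ≤ γ)
    {β : ℕ → SignedMeasure ℝ≥0} (hβ : ∀ k, 0 ≤ β k) (hγβ : IsSumOf γ β)
    (hs : Summable fun k => π (β k)) : π γ = ∑' k, π (β k) := by
  have hβπ (k : ℕ) : 0 ≤ π (β k) := price_nonneg hM hNA hπ (hβ k)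
  exact price_eq hM hNA hπ <| hσ β _ hβ (fun k => zero_le_smul_uzcb (hβπ k) 0) (fun k => hπ (β k))
    γ _ hγ (zero_le_smul_uzcb (tsum_nonneg hβπ) 0) hγβ (isSumOf_tsum_smul _ hs)

variable {P : ℝ≥0 → ℝ} (hP : ∀ t, P t = π (uzcb t))
include hP

lemma bondPrice_nonneg (t : ℝ≥0) : 0 ≤ P t :=
  hP t ▸ price_nonneg hM hNA hπ (zero_le_uzcb t)

lemma bondPrice_zero : P 0 = 1 := by
  rw [hP, ← one_smul ℝ (uzcb 0), price_smul_uzcb_zero hM hNA hπ]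

/-- `k * h - h` is truncated subtraction, so the cell of index `0` is `{0}`. -/
lemma exists_price_restrict_fiber (havg : HasAverageValues π P) (μ : Measure ℝ≥0)
    [IsFiniteMeasure μ] {h : ℝ≥0} (hh : 0 < h) (k : ℕ) :
    ∃ b ∈ Icc (sInf (P '' Icc (k * h - h) (k * h))) (sSup (P '' Icc (k * h - h) (k * h))),
      π (μ.restrict ((fun t => ⌈t / h⌉₊) ⁻¹' {k})).toSignedMeasure =
        b * μ.real ((fun t => ⌈t / h⌉₊) ⁻¹' {k}) := by
  cases k with
  | zero =>
    have hfib : (fun t : ℝ≥0 => ⌈t / h⌉₊) ⁻¹' {0} = {0} := by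
      ext t; simp [ceil_div_eq_zero_iff hh]
    refine ⟨P 0, by simp, ?_⟩
    rw [hfib, toSignedMeasure_restrict_singleton_zero, price_smul_uzcb_zero hM hNA hπ,
      bondPrice_zero hM hNA hπ hP, one_mul]
  | succ k =>
    have hfib : (fun t : ℝ≥0 => ⌈t / h⌉₊) ⁻¹' {k + 1} = Ioc (k * h) ((k + 1) * h) := by
      ext t; exact ceil_div_eq_succ_iff hh
    obtain ⟨b, hb₁, hb₂, hb⟩ := havg μ.toSignedMeasure (Measure.zero_le_toSignedMeasure μ)
      (k * h) ((k + 1) * h) (mul_lt_mul_of_pos_right (lt_add_one _) hh)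
    refine ⟨b, ?_, ?_⟩
    · push_cast
      rw [add_mul, one_mul, add_tsub_cancel_right, ← add_one_mul]
      exact ⟨hb₁, hb₂⟩
    · rw [hfib, ← μ.toSignedMeasure_restrict_eq_restrict_toSignedMeasure _ measurableSet_Ioc,
        hb, Measure.toSignedMeasure_apply_measurable measurableSet_Ioc]

lemma exists_price_eq_integral_ceil_div (havg : HasAverageValues π P) (hσ : IsSigmaAdditiveRel r)
    {C : ℝ} (hC : ∀ t, P t ≤ C) (μ : Measure ℝ≥0) [IsFiniteMeasure μ] {h : ℝ≥0} (hh : 0 < h) :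
    ∃ b : ℕ → ℝ,
      (∀ k : ℕ,
        b k ∈ Icc (sInf (P '' Icc (k * h - h) (k * h))) (sSup (P '' Icc (k * h - h) (k * h)))) ∧
      (∀ k, ‖b k‖ ≤ C) ∧ π μ.toSignedMeasure = ∫ t, b ⌈t / h⌉₊ ∂μ := by
  have hf : Measurable fun t : ℝ≥0 => ⌈t / h⌉₊ := (measurable_id.div_const h).nat_ceil
  choose b hb hπb using exists_price_restrict_fiber hM hNA hπ hP havg μ hh
  have hbC (k : ℕ) : ‖b k‖ ≤ C := by
    have hne : (P '' Icc (k * h - h) (k * h)).Nonempty := (nonempty_Icc.2 tsub_le_self).image P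
    rw [Real.norm_of_nonneg <| (Real.sInf_nonneg <| forall_mem_image.2 fun t _ =>
      bondPrice_nonneg hM hNA hπ hP t).trans (hb k).1]
    exact (hb k).2.trans (csSup_le hne <| forall_mem_image.2 fun t _ => hC t)
  refine ⟨b, hb, hbC, ?_⟩
  have hsum : Summable fun k => π (μ.restrict ((fun t => ⌈t / h⌉₊) ⁻¹' {k})).toSignedMeasure := by
    simp_rw [hπb]
    refine .of_norm_bounded ((summable_measureReal_fiber μ hf).mul_left C) fun k => ?_
    rw [norm_mul, Real.norm_of_nonneg measureReal_nonneg]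
    exact mul_le_mul_of_nonneg_right (hbC k) measureReal_nonneg
  have hμ : IsSumOf μ.toSignedMeasure
      fun k => (μ.restrict ((fun t => ⌈t / h⌉₊) ⁻¹' {k})).toSignedMeasure := by
    simpa [μ.toSignedMeasure_restrict_eq_restrict_toSignedMeasure _
      (hf (measurableSet_singleton _))] using isSumOf_restrict_fiber μ.toSignedMeasure hf
  rw [integral_comp_eq_tsum hf hbC, price_eq_tsum hM hNA hπ hσ μ.zero_le_toSignedMeasure
    (fun _ => Measure.zero_le_toSignedMeasure _) hμ hsum]
  exact tsum_congr hπb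

lemma price_toSignedMeasure (hPcont : Continuous P) (hPbdd : ∃ M : ℝ, ∀ t, P t ≤ M)
    (havg : HasAverageValues π P) (hσ : IsSigmaAdditiveRel r) (μ : Measure ℝ≥0)
    [IsFiniteMeasure μ] : π μ.toSignedMeasure = ∫ t, P t ∂μ := by
  obtain ⟨C, hC⟩ := hPbdd
  have hh (n : ℕ) : (0 : ℝ≥0) < 1 / (n + 1) := by positivity
  have hδ : Tendsto (fun n : ℕ => ((1 / (n + 1) : ℝ≥0) : ℝ)) atTop (𝓝 0) :=
    NNReal.tendsto_coe.2 tendsto_one_div_add_atTop_nhds_zero_nat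
  choose b hb hbC hπb using fun n =>
    exists_price_eq_integral_ceil_div hM hNA hπ hP havg hσ hC μ (hh n)
  have hlim := tendsto_integral_of_dominated_convergence (μ := μ) (fun _ => C)
    (fun n => ((measurable_of_countable (b n)).comp
      (measurable_id.div_const _).nat_ceil).aestronglyMeasurable)
    (integrable_const C) (fun n => ae_of_all _ fun t => hbC n _)
    (ae_of_all _ fun t => tendsto_of_mem_Icc_sInf_sSup_image hPcont.continuousAt hδ
      (fun n => mem_Icc_ceil_div (hh n) t)
      (fun n => Icc_tsub_subset_closedBall (mem_Icc_ceil_div (hh n) t)) (fun n => hb n _))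
  exact tendsto_nhds_unique (tendsto_const_nhds.congr hπb) hlim

end IsMarket

theorem choquet_general_general (r : SignedMeasure ℝ≥0 → SignedMeasure ℝ≥0 → Prop)
    (hM : IsMarket r) (hNA : NoArb r)
    (π : SignedMeasure ℝ≥0 → ℝ)
    (hπ : ∀ γ : SignedMeasure ℝ≥0, r γ (π γ • uzcb 0))
    (P : ℝ≥0 → ℝ) (hP : ∀ t, P t = π (uzcb t))
    (hPcont : Continuous P) (hPbdd : ∃ M : ℝ, ∀ t, P t ≤ M)
    (havg : ∀ γ : SignedMeasure ℝ≥0, 0 ≤ γ → ∀ s t : ℝ≥0, s < t →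
      ∃ b : ℝ, sInf (P '' Set.Icc s t) ≤ b ∧ b ≤ sSup (P '' Set.Icc s t) ∧
        π (γ.restrict (Set.Ioc s t)) = b * γ (Set.Ioc s t))
    (hσ : ∀ β γ : ℕ → SignedMeasure ℝ≥0, (∀ k, 0 ≤ β k) → (∀ k, 0 ≤ γ k) →
      (∀ k, r (β k) (γ k)) → ∀ B G : SignedMeasure ℝ≥0, 0 ≤ B → 0 ≤ G →
      IsSumOf B β → IsSumOf G γ → r B G) :
    ∀ γ : SignedMeasure ℝ≥0, π γ = sInt P γ := by
  intro γ
  have hprice := hM.price_toSignedMeasure hNA hπ hP hPcont hPbdd havg hσ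
  rw [sInt, ← hprice, ← hprice, ← hM.price_sub hNA hπ, ← JordanDecomposition.toSignedMeasure,
    SignedMeasure.toSignedMeasure_toJordanDecomposition]

/-- Choquet formula for general cash flows. Under NA, (A1) continuous bounded
strictly positive UZCB prices, (A2) the average value requirement, and (A3) σ-additivity of
the exchange relation, the NA price of every cash flow is π(γ) = ∫₀^∞ P_t dγ(t). -/
theorem choquet_general (r : SignedMeasure ℝ≥0 → SignedMeasure ℝ≥0 → Prop)
    (hM : IsMarket r) (hNA : NoArb r)
    (π : SignedMeasure ℝ≥0 → ℝ)
    (hπ : ∀ γ : SignedMeasure ℝ≥0, r γ (π γ • uzcb 0))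
    (P : ℝ≥0 → ℝ) (hP : ∀ t, P t = π (uzcb t))
    (hPcont : Continuous P) (hPbdd : ∃ M : ℝ, ∀ t, P t ≤ M) (hPpos : ∀ t, 0 < P t)
    (havg : ∀ γ : SignedMeasure ℝ≥0, 0 ≤ γ → ∀ s t : ℝ≥0, s < t →
      ∃ b : ℝ, sInf (P '' Set.Icc s t) ≤ b ∧ b ≤ sSup (P '' Set.Icc s t) ∧
        π (γ.restrict (Set.Ioc s t)) = b * γ (Set.Ioc s t))
    (hσ : ∀ β γ : ℕ → SignedMeasure ℝ≥0, (∀ k, 0 ≤ β k) → (∀ k, 0 ≤ γ k) →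
      (∀ k, r (β k) (γ k)) → ∀ B G : SignedMeasure ℝ≥0, 0 ≤ B → 0 ≤ G →
      IsSumOf B β → IsSumOf G γ → r B G) :
    ∀ γ : SignedMeasure ℝ≥0, π γ = sInt P γ :=
  choquet_general_general r hM hNA π hπ P hP hPcont hPbdd havg hσ
end
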